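/- arXiv:0708.3354 — 4 statements merged into one kernel-verified Lean document; each statement's English description precedes it below -/
import Mathlib

section
/- Let Q = (Q_1,...,Q_n) be an n-tuple of nonnegative integers and let G_Q be the set of n-tuples I = (I_1,...,I_n) with 0 ≤ I_i ≤ Q_i, partially ordered by I ⪰ J iff I_i ≤ J_i for all i. If φ: G_Q → ℝ is order-preserving with ∑_{I ∈ G_Q} φ(I) ≥ 0, and P ∈ G_Q, then ∑_{I ∈ G_P} φ(I) ≥ 0, where G_P := {I | 0 ≤ I_i ≤ P_i for all i} ⊆ G_Q. -/
/-! The indicator of `G_P` is antitone on the distributive lattice `G_Q`, so the Harris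
inequality gives `|G_Q| · ∑_{G_P} φ ≥ |G_P| · ∑_{G_Q} φ ≥ 0`. -/

open Finset

section Harris

variable {α β : Type*} [Fintype α] [CommRing β] [LinearOrder β] [IsStrictOrderedRing β]

theorem add_sum_abs_nonneg (f : α → β) (a : α) : 0 ≤ f a + ∑ b, |f b| := by
  have := single_le_sum (fun b _ ↦ abs_nonneg (f b)) (mem_univ a)
  linarith [neg_abs_le (f a)]

variable [DistribLattice α]

theorem Monotone.sum_mul_sum_le_card_mul_sum {f g : α → β} (hf : Monotone f) (hg : Monotone g) :
    (∑ a, f a) * ∑ a, g a ≤ Fintype.card α * ∑ a, f a * g a := by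
  -- Shift `f` and `g` to be nonnegative so that `fkg` applies; both sides change by the same amount.
  have hc : 0 ≤ fun a ↦ f a + ∑ b, |f b| := fun a ↦ add_sum_abs_nonneg f a
  have hd : 0 ≤ fun a ↦ g a + ∑ b, |g b| := fun a ↦ add_sum_abs_nonneg g a
  have := fkg _ _ (fun _ ↦ (1 : β)) (fun _ ↦ zero_le_one) hc hd
    (fun _ _ h ↦ add_le_add_left (hf h) _) (fun _ _ h ↦ add_le_add_left (hg h) _)
    (fun _ _ ↦ le_rfl)
  simp only [one_mul, sum_const, card_univ, nsmul_eq_mul, mul_one, mul_add, add_mul,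
    sum_add_distrib, ← sum_mul, ← mul_sum] at this
  linear_combination this

theorem Antitone.sum_mul_sum_le_card_mul_sum {f g : α → β} (hf : Antitone f) (hg : Antitone g) :
    (∑ a, f a) * ∑ a, g a ≤ Fintype.card α * ∑ a, f a * g a := by
  simpa [sum_neg_distrib] using hf.neg.sum_mul_sum_le_card_mul_sum hg.neg

end Harris

/-- If `φ` is order-preserving on `G_Q` (with `I ⪰ J ↔ ∀ i, I i ≤ J i`) and has
nonnegative total sum, then its sum over `G_P ⊆ G_Q` is nonnegative, for any
`P ∈ G_Q`. -/
theorem statement_6 (n : ℕ) (Q : Fin n → ℕ)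
    (φ : (∀ i : Fin n, Fin (Q i + 1)) → ℝ)
    (hφ : ∀ I J : (∀ i : Fin n, Fin (Q i + 1)),
      (∀ i, (I i : ℕ) ≤ (J i : ℕ)) → φ J ≤ φ I)
    (hsum : 0 ≤ ∑ I : (∀ i : Fin n, Fin (Q i + 1)), φ I)
    (P : ∀ i : Fin n, Fin (Q i + 1)) :
    0 ≤ ∑ I ∈ Finset.univ.filter
        (fun I : (∀ i : Fin n, Fin (Q i + 1)) => ∀ i, (I i : ℕ) ≤ (P i : ℕ)), φ I := by
  let indicator : (∀ i : Fin n, Fin (Q i + 1)) → ℝ := fun I ↦ if ∀ i, (I i : ℕ) ≤ P i then 1 else 0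
  have hindicator : Antitone indicator := fun I J hIJ ↦ by
    by_cases hJ : ∀ i, (J i : ℕ) ≤ P i
    · have hI : ∀ i, (I i : ℕ) ≤ P i := fun i ↦ (hIJ i).trans (hJ i)
      simp only [indicator, hI, hJ, le_refl]
    · simp only [indicator, hJ, if_false]
      split <;> norm_num
  have harris := Antitone.sum_mul_sum_le_card_mul_sum (β := ℝ) (fun I J h ↦ hφ I J h) hindicator
  have hφ_indicator : ∑ I, φ I * indicator I =
      ∑ I ∈ univ.filter (fun I : (∀ i : Fin n, Fin (Q i + 1)) ↦ ∀ i, (I i : ℕ) ≤ P i), φ I := by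
    simp only [indicator, mul_ite, mul_one, mul_zero, sum_ite, sum_const_zero, add_zero]
  have hindicator_sum : 0 ≤ ∑ I, indicator I := Finset.sum_nonneg fun I _ ↦ by
    simp only [indicator]; split <;> norm_num
  rw [← hφ_indicator]
  exact nonneg_of_mul_nonneg_right ((mul_nonneg hsum hindicator_sum).trans harris)
    (by exact_mod_cast Fintype.card_pos)
end

section
/- Let k be a field of characteristic 0, let R = k[X_1,...,X_r] act on D = k[x_1,...,x_r] by differentiation, and let A = R/I be a level algebra of socle degree j. If f ∈ D_j satisfies I_j * f = 0, then I * f = 0. -/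
/-- The iterated partial derivative operator `∂^E` associated to a
multi-index `E`. -/
noncomputable def pdPow {k : Type*} [CommSemiring k] {r : ℕ} (E : Fin r →₀ ℕ) :
    MvPolynomial (Fin r) k →ₗ[k] MvPolynomial (Fin r) k :=
  ((List.finRange r).map fun i =>
    ((MvPolynomial.pderiv i :
        Derivation k (MvPolynomial (Fin r) k) (MvPolynomial (Fin r) k)).toLinearMap) ^ (E i)).prod

/-- The action `F * f` of a polynomial `F` on a polynomial `f` by letting each
variable `X i` of `F` act as `∂/∂x i`. -/
noncomputable def act {k : Type*} [CommSemiring k] {r : ℕ}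
    (F f : MvPolynomial (Fin r) k) : MvPolynomial (Fin r) k :=
  ∑ E ∈ F.support, F.coeff E • (pdPow E) f

/-!
A homogeneous `F ∈ I` of degree `d > j` kills the form `f` of degree `j` for degree reasons.
If `d ≤ j`, then `F * f` is a form of degree `j - d`, and each of its derivatives `∂^E (F * f)`
of order `j - d` equals `(X^E F) * f` with `X^E F ∈ I_j`, hence vanishes. In characteristic zero
a form whose derivatives of top order all vanish is zero, since `∂^s` reads off `s!` times the
coefficient of `x^s`. As `I` is homogeneous, this settles every `F ∈ I`.
-/

open MvPolynomial Finsupp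

lemma Finsupp.eq_of_le_of_degree_eq {σ : Type*} {s t : σ →₀ ℕ} (hle : s ≤ t)
    (h : s.degree = t.degree) : s = t := by
  have : (t - s).degree = 0 := by
    rw [← add_right_cancel_iff (a := s.degree), ← map_add, tsub_add_cancel_of_le hle, h,
      zero_add]
  exact le_antisymm hle (tsub_eq_zero_iff_le.mp ((degree_eq_zero_iff _).mp this))

lemma MvPolynomial.IsHomogeneous.degree_eq_of_mem_support {σ R : Type*} [CommSemiring R]
    {φ : MvPolynomial σ R} {n : ℕ} (hφ : φ.IsHomogeneous n) {s : σ →₀ ℕ}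
    (hs : s ∈ φ.support) : s.degree = n := by
  rw [degree_eq_weight_one]
  exact hφ (mem_support_iff.mp hs)

lemma MvPolynomial.pderiv_pow_monomial {σ R : Type*} [CommSemiring R] [DecidableEq σ]
    (i : σ) (n : ℕ) (s : σ →₀ ℕ) (a : R) :
    ((pderiv i : Derivation R (MvPolynomial σ R) (MvPolynomial σ R)).toLinearMap ^ n)
        (monomial s a) = monomial (s - single i n) (a * (s i).descFactorial n) := by
  induction n with
  | zero => simp
  | succ n ih =>
    rw [pow_succ', Module.End.mul_apply, ih, Derivation.coeFn_coe, pderiv_monomial,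
      tsub_tsub, ← single_add, Nat.descFactorial_succ]
    simp only [coe_tsub, Pi.sub_apply, single_eq_same, Nat.cast_mul]
    ring_nf

section

variable {k : Type*} [CommSemiring k] {r : ℕ}

lemma list_prod_pderiv_pow_monomial (E : Fin r →₀ ℕ) {l : List (Fin r)} (hl : l.Nodup)
    (s : Fin r →₀ ℕ) (a : k) :
    (l.map fun i => (pderiv i : Derivation k (MvPolynomial (Fin r) k)
        (MvPolynomial (Fin r) k)).toLinearMap ^ E i).prod (monomial s a)
      = monomial (s - ∑ i ∈ l.toFinset, single i (E i))
          (a * ∏ i ∈ l.toFinset, ((s i).descFactorial (E i) : k)) := by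
  induction l generalizing s a with
  | nil => simp
  | cons i l ih =>
    obtain ⟨hi, hl⟩ := List.nodup_cons.mp hl
    have hi' : i ∉ l.toFinset := by simpa using hi
    have hsi : (s - ∑ j ∈ l.toFinset, single j (E j)) i = s i := by
      simp [single_apply, hi]
    rw [List.map_cons, List.prod_cons, Module.End.mul_apply, ih hl, pderiv_pow_monomial, hsi,
      List.toFinset_cons, Finset.sum_insert hi', Finset.prod_insert hi', tsub_tsub, add_comm,
      mul_assoc, mul_comm (∏ _ ∈ _, _)]

lemma pdPow_monomial (E s : Fin r →₀ ℕ) (a : k) :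
    pdPow E (monomial s a) = monomial (s - E) (a * ∏ i, ((s i).descFactorial (E i) : k)) := by
  rw [pdPow, list_prod_pderiv_pow_monomial E (List.nodup_finRange r), List.toFinset_finRange,
    univ_sum_single]

lemma pdPow_monomial_of_not_le {E s : Fin r →₀ ℕ} (h : ¬E ≤ s) (a : k) :
    pdPow E (monomial s a) = 0 := by
  obtain ⟨i, hi⟩ : ∃ i, s i < E i := by simpa [Finsupp.le_def] using h
  rw [pdPow_monomial, Finset.prod_eq_zero (Finset.mem_univ i)
    (by simp [Nat.descFactorial_of_lt hi]), mul_zero, map_zero]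

lemma pdPow_add (E E' : Fin r →₀ ℕ) :
    (pdPow (E + E') : MvPolynomial (Fin r) k →ₗ[k] _) = pdPow E ∘ₗ pdPow E' := by
  refine linearMap_ext fun s => LinearMap.ext fun a => ?_
  simp only [LinearMap.comp_apply, pdPow_monomial, tsub_tsub, add_comm E', mul_assoc,
    ← Finset.prod_mul_distrib, ← Nat.cast_mul]
  congr 2
  refine Finset.prod_congr rfl fun i _ => ?_
  rw [Finsupp.add_apply, tsub_apply, ← Nat.descFactorial_mul_descFactorial (Nat.le_add_left _ _),
    Nat.add_sub_cancel, mul_comm]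

noncomputable def actLeft (f : MvPolynomial (Fin r) k) :
    MvPolynomial (Fin r) k →ₗ[k] MvPolynomial (Fin r) k :=
  Finsupp.linearCombination k (fun E => pdPow E f) ∘ₗ
    (AddMonoidAlgebra.coeffLinearEquiv k).toLinearMap

lemma actLeft_apply (F f : MvPolynomial (Fin r) k) : actLeft f F = act F f := rfl

lemma act_monomial (E : Fin r →₀ ℕ) (c : k) (f : MvPolynomial (Fin r) k) :
    act (monomial E c) f = c • pdPow E f :=
  Finsupp.linearCombination_single k c E

lemma act_monomial_mul (E : Fin r →₀ ℕ) (c : k) (F f : MvPolynomial (Fin r) k) :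
    act (monomial E c * F) f = c • pdPow E (act F f) := by
  induction F using MvPolynomial.induction_on' with
  | monomial E' a => rw [monomial_mul, act_monomial, act_monomial, pdPow_add,
      LinearMap.comp_apply, map_smul, smul_smul]
  | add F G hF hG =>
    simp only [mul_add, ← actLeft_apply, map_add] at hF hG ⊢
    rw [hF, hG, smul_add]

lemma pdPow_eq_sum_monomial (E : Fin r →₀ ℕ) (f : MvPolynomial (Fin r) k) :
    pdPow E f = ∑ s ∈ f.support, pdPow E (monomial s (coeff s f)) := by
  conv_lhs => rw [f.as_sum]
  exact map_sum _ _ _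

lemma MvPolynomial.IsHomogeneous.pdPow {f : MvPolynomial (Fin r) k} {n : ℕ}
    (hf : f.IsHomogeneous n) (E : Fin r →₀ ℕ) : (pdPow E f).IsHomogeneous (n - E.degree) := by
  rw [pdPow_eq_sum_monomial]
  refine IsHomogeneous.sum _ _ _ fun s hs => ?_
  by_cases hle : E ≤ s
  · rw [pdPow_monomial]
    refine isHomogeneous_monomial _ ?_
    rw [← hf.degree_eq_of_mem_support hs, ← tsub_add_cancel_of_le hle, map_add,
      Nat.add_sub_cancel, tsub_add_cancel_of_le hle]
  · rw [pdPow_monomial_of_not_le hle]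
    exact isHomogeneous_zero _ _ _

lemma pdPow_eq_zero_of_lt_degree {f : MvPolynomial (Fin r) k} {n : ℕ} (hf : f.IsHomogeneous n)
    {E : Fin r →₀ ℕ} (hE : n < E.degree) : pdPow E f = 0 := by
  rw [pdPow_eq_sum_monomial]
  refine Finset.sum_eq_zero fun s hs => pdPow_monomial_of_not_le (fun hle => ?_) _
  exact (hf.degree_eq_of_mem_support hs ▸ hE).not_ge (degree_mono hle)

lemma MvPolynomial.IsHomogeneous.act {F f : MvPolynomial (Fin r) k} {d n : ℕ}
    (hF : F.IsHomogeneous d) (hf : f.IsHomogeneous n) : (act F f).IsHomogeneous (n - d) :=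
  (mem_homogeneousSubmodule _ _).mp <| Submodule.sum_mem _ fun E hE =>
    Submodule.smul_mem _ _ <| hF.degree_eq_of_mem_support hE ▸ hf.pdPow E

lemma act_eq_zero_of_lt {F f : MvPolynomial (Fin r) k} {d n : ℕ}
    (hF : F.IsHomogeneous d) (hf : f.IsHomogeneous n) (hnd : n < d) : act F f = 0 :=
  Finset.sum_eq_zero fun E hE => by
    rw [pdPow_eq_zero_of_lt_degree hf (hF.degree_eq_of_mem_support hE ▸ hnd), smul_zero]

lemma pdPow_eq_C_of_degree_eq {g : MvPolynomial (Fin r) k} {e : ℕ} (hg : g.IsHomogeneous e)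
    {s : Fin r →₀ ℕ} (hs : s.degree = e) :
    pdPow s g = C (coeff s g * ∏ i, ((s i).factorial : k)) := by
  rw [pdPow_eq_sum_monomial, Finset.sum_eq_single s]
  · simp only [pdPow_monomial, tsub_self, Nat.descFactorial_self, ← C_apply]
  · intro t ht hts
    refine pdPow_monomial_of_not_le (fun hle => hts ?_) _
    exact (eq_of_le_of_degree_eq hle (by rw [hs, hg.degree_eq_of_mem_support ht])).symm
  · intro hs
    simp [MvPolynomial.notMem_support_iff.mp hs]

end

lemma eq_zero_of_forall_pdPow_eq_zero {k : Type*} [Field k] [CharZero k] {r e : ℕ}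
    {g : MvPolynomial (Fin r) k} (hg : g.IsHomogeneous e)
    (h : ∀ s : Fin r →₀ ℕ, s.degree = e → pdPow s g = 0) : g = 0 := by
  ext s
  by_cases hs : s.degree = e
  · have := h s hs
    rw [pdPow_eq_C_of_degree_eq hg hs, C_eq_zero, mul_eq_zero] at this
    refine this.resolve_right (Finset.prod_ne_zero_iff.mpr fun i _ => ?_)
    exact_mod_cast Nat.factorial_ne_zero _
  · exact hg.coeff_eq_zero hs

lemma act_eq_zero_of_isHomogeneous {k : Type*} [Field k] [CharZero k] {r j d : ℕ}
    {I : Ideal (MvPolynomial (Fin r) k)} {f : MvPolynomial (Fin r) k} (hf : f.IsHomogeneous j)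
    (hperp : ∀ F ∈ I, F.IsHomogeneous j → act F f = 0)
    {F : MvPolynomial (Fin r) k} (hFI : F ∈ I) (hF : F.IsHomogeneous d) : act F f = 0 := by
  rcases lt_or_ge j d with hjd | hdj
  · exact act_eq_zero_of_lt hF hf hjd
  refine eq_zero_of_forall_pdPow_eq_zero (hF.act hf) fun E hE => ?_
  have hEF : (monomial E (1 : k) * F).IsHomogeneous j := by
    simpa [Nat.sub_add_cancel hdj] using (isHomogeneous_monomial (1 : k) hE).mul hF
  simpa [act_monomial_mul] using hperp _ (I.mul_mem_left _ hFI) hEF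

theorem statement_12_general {k : Type*} [Field k] [CharZero k] (r j : ℕ)
    (I : Ideal (MvPolynomial (Fin r) k))
    (hhom : ∀ F ∈ I, ∀ d : ℕ, MvPolynomial.homogeneousComponent d F ∈ I)
    (f : MvPolynomial (Fin r) k) (hf : f.IsHomogeneous j)
    (hperp : ∀ F ∈ I, F.IsHomogeneous j → act F f = 0) :
    ∀ F ∈ I, act F f = 0 := by
  intro F hF
  rw [← sum_homogeneousComponent F, ← actLeft_apply, map_sum]
  exact Finset.sum_eq_zero fun d _ =>
    act_eq_zero_of_isHomogeneous hf hperp (hhom F hF d) (homogeneousComponent_isHomogeneous d F)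

/-- For a level algebra `A = R/I` of socle degree `j`: if `f ∈ D_j` is killed
by `I_j` under the differentiation action, then `f` is killed by all of `I`. -/
theorem statement_12 {k : Type*} [Field k] [CharZero k] (r j : ℕ)
    (I : Ideal (MvPolynomial (Fin r) k))
    (hhom : ∀ F ∈ I, ∀ d : ℕ, MvPolynomial.homogeneousComponent d F ∈ I)
    (hart : ∀ d : ℕ, j < d → ∀ F : MvPolynomial (Fin r) k,
      F.IsHomogeneous d → F ∈ I)
    (htop : ∃ F : MvPolynomial (Fin r) k, F.IsHomogeneous j ∧ F ∉ I)
    (hlevel : ∀ d < j, ∀ F : MvPolynomial (Fin r) k, F.IsHomogeneous d → F ∉ I →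
      ∃ G : MvPolynomial (Fin r) k, G.IsHomogeneous 1 ∧ G * F ∉ I)
    (f : MvPolynomial (Fin r) k) (hf : f.IsHomogeneous j)
    (hperp : ∀ F ∈ I, F.IsHomogeneous j → act F f = 0) :
    ∀ F ∈ I, act F f = 0 :=
  statement_12_general r j I hhom f hf hperp
end

section
/- Fix r ≥ 2, j ≥ 0, and a constraint Q = (Q_1,...,Q_n) with n ≤ r such that at least one of the r coordinates has no effective bound below j. Let m_Q(d) be the number of r-tuples of nonnegative integers (d_1,...,d_r) with d_1 + ... + d_r = d and d_i ≤ Q_i for i = 1,...,n. Then m_Q is nondecreasing on 0 ≤ d ≤ j: if d_1 < d_2 ≤ j then m_Q(d_1) ≤ m_Q(d_2). -/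
/-- If the constraint `Q` leaves at least one of the `r` coordinates
effectively unconstrained (no bound below `j`), then the number `m_Q(d)` of
`r`-tuples of degree `d` constrained by `Q` is nondecreasing for `d ≤ j`. -/
theorem statement_16 (r j n : ℕ) (hr : 2 ≤ r) (hn : n ≤ r) (Q : Fin n → ℕ)
    (hfree : ∃ i : Fin r, ∀ i' : Fin n, Fin.castLE hn i' = i → j ≤ Q i') :
    ∀ d₁ d₂ : ℕ, d₁ < d₂ → d₂ ≤ j →
      Set.ncard {D : Fin r → ℕ | ∑ i, D i = d₁ ∧
          ∀ i' : Fin n, D (Fin.castLE hn i') ≤ Q i'}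
        ≤ Set.ncard {D : Fin r → ℕ | ∑ i, D i = d₂ ∧
          ∀ i' : Fin n, D (Fin.castLE hn i') ≤ Q i'} := by
  obtain ⟨i₀, hi₀⟩ := hfree
  intro d₁ d₂ hlt hle
  set k := d₂ - d₁ with hk
  have hfin : {D : Fin r → ℕ | ∑ i, D i = d₂ ∧
      ∀ i' : Fin n, D (Fin.castLE hn i') ≤ Q i'}.Finite := by
    apply Set.Finite.subset (Set.finite_Icc (fun _ => 0) (fun _ : Fin r => d₂))
    rintro D ⟨hsum, -⟩
    constructor
    · intro i; exact Nat.zero_le _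
    · intro i
      exact hsum ▸ Finset.single_le_sum (fun _ _ => Nat.zero_le _) (Finset.mem_univ i)
  have hmaps : Set.MapsTo (fun D => Function.update D i₀ (D i₀ + k))
      {D : Fin r → ℕ | ∑ i, D i = d₁ ∧ ∀ i' : Fin n, D (Fin.castLE hn i') ≤ Q i'}
      {D : Fin r → ℕ | ∑ i, D i = d₂ ∧ ∀ i' : Fin n, D (Fin.castLE hn i') ≤ Q i'} := by
    rintro D ⟨hsum, hQ⟩
    have hsplit : ∑ i, D i = D i₀ + ∑ i ∈ Finset.univ.erase i₀, D i :=
      (Finset.add_sum_erase _ _ (Finset.mem_univ i₀)).symm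
    constructor
    · show ∑ i, Function.update D i₀ (D i₀ + k) i = d₂
      rw [Finset.sum_update_of_mem (Finset.mem_univ i₀),
        Finset.sdiff_singleton_eq_erase]
      omega
    · intro i'
      show Function.update D i₀ (D i₀ + k) (Fin.castLE hn i') ≤ Q i'
      by_cases h : Fin.castLE hn i' = i₀
      · rw [h, Function.update_self]
        have h1 : D i₀ ≤ d₁ := by omega
        have := hi₀ i' h
        omega
      · rw [Function.update_of_ne h]; exact hQ i'
  have hinj : Set.InjOn (fun D => Function.update D i₀ (D i₀ + k))
      {D : Fin r → ℕ | ∑ i, D i = d₁ ∧ ∀ i' : Fin n, D (Fin.castLE hn i') ≤ Q i'} := by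
    intro D1 _ D2 _ heq
    funext x
    by_cases hx : x = i₀
    · subst hx
      have := congrFun heq x
      simp only [Function.update_self] at this
      omega
    · have := congrFun heq x
      simpa [Function.update_of_ne hx] using this
  exact Set.ncard_le_ncard_of_injOn _ hmaps hinj hfin
end

section
/- Let r ≥ 3 and let Q = (Q_1,...,Q_{r-2}) constrain the first r-2 coordinates of r-tuples. Set a_i := Q_i + 1, S := a_1 + ... + a_{r-2}, P := a_1 a_2 ··· a_{r-2}, and q := Q_1 + ... + Q_{r-2}. Then for every d ≥ q, the number of r-tuples (d_1,...,d_r) of nonnegative integers of total degree d with d_i ≤ Q_i for i = 1,...,r-2 equals P(2d - S + r)/2. -/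
private lemma sum_split18 (m : ℕ) (D : Fin (m + 2) → ℕ) :
    ∑ i, D i = (∑ i : Fin m, D (Fin.castLE (Nat.le_add_right m 2) i))
      + D ((Fin.last m).castSucc) + D (Fin.last (m + 1)) := by
  rw [Fin.sum_univ_castSucc, Fin.sum_univ_castSucc]
  rfl

private def equiv18 (m : ℕ) (Q : Fin m → ℕ) (d : ℕ) (hd : ∑ i, Q i ≤ d) :
    {D : Fin (m + 2) → ℕ // ∑ i, D i = d ∧
        ∀ i : Fin m, D (Fin.castLE (Nat.le_add_right m 2) i) ≤ Q i} ≃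
    (Σ c : (∀ i : Fin m, Fin (Q i + 1)), Fin (d + 1 - ∑ i, (c i : ℕ))) where
  toFun D := ⟨fun i => ⟨D.1 (Fin.castLE (Nat.le_add_right m 2) i), Nat.lt_succ_of_le (D.2.2 i)⟩,
    ⟨D.1 ((Fin.last m).castSucc), by
      have h := sum_split18 m D.1
      have h2 := D.2.1
      simp only [Fin.val_mk]
      omega⟩⟩
  invFun p := ⟨Fin.snoc (Fin.snoc (fun i => (p.1 i : ℕ)) (p.2 : ℕ))
      (d - ∑ i, (p.1 i : ℕ) - (p.2 : ℕ)), by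
    have hc : ∑ i, (p.1 i : ℕ) ≤ d := by
      refine le_trans (Finset.sum_le_sum fun i _ => ?_) hd
      exact Nat.lt_succ_iff.mp (p.1 i).2
    have he := p.2.2
    constructor
    · rw [sum_split18]
      have e1 : ∀ i : Fin m,
          (Fin.snoc (Fin.snoc (fun i => (p.1 i : ℕ)) (p.2 : ℕ))
            (d - ∑ i, (p.1 i : ℕ) - (p.2 : ℕ)) : Fin (m+2) → ℕ)
            (Fin.castLE (Nat.le_add_right m 2) i) = (p.1 i : ℕ) := by
        intro i
        have : Fin.castLE (Nat.le_add_right m 2) i = (i.castSucc).castSucc := rfl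
        rw [this, Fin.snoc_castSucc, Fin.snoc_castSucc]
      simp only [e1, Fin.snoc_castSucc, Fin.snoc_last]
      omega
    · intro i
      have : Fin.castLE (Nat.le_add_right m 2) i = (i.castSucc).castSucc := rfl
      rw [this, Fin.snoc_castSucc, Fin.snoc_castSucc]
      exact Nat.lt_succ_iff.mp (p.1 i).2⟩
  left_inv := by
    rintro ⟨D, hD1, hD2⟩
    ext j
    simp only
    induction j using Fin.lastCases with
    | last =>
      rw [Fin.snoc_last]
      have h := sum_split18 m D
      omega
    | cast j =>
      rw [Fin.snoc_castSucc]
      induction j using Fin.lastCases with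
      | last => rw [Fin.snoc_last]
      | cast j => rw [Fin.snoc_castSucc]; rfl
  right_inv := by
    rintro ⟨c, e⟩
    have hc : ∀ i : Fin m, (Fin.snoc (Fin.snoc (fun i => (c i : ℕ)) (e : ℕ))
        (d - ∑ i, (c i : ℕ) - (e : ℕ)) : Fin (m+2) → ℕ)
        (Fin.castLE (Nat.le_add_right m 2) i) = (c i : ℕ) := by
      intro i
      have : Fin.castLE (Nat.le_add_right m 2) i = (i.castSucc).castSucc := rfl
      rw [this, Fin.snoc_castSucc, Fin.snoc_castSucc]
    refine Sigma.ext ?_ ?_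
    · funext i
      exact Fin.ext (hc i)
    · simp only
      rw [Fin.heq_ext_iff]
      · show (Fin.snoc (Fin.snoc (fun i => (c i : ℕ)) (e : ℕ))
          (d - ∑ i, (c i : ℕ) - (e : ℕ)) : Fin (m+2) → ℕ) ((Fin.last m).castSucc) = (e : ℕ)
        rw [Fin.snoc_castSucc, Fin.snoc_last]
      · congr 1
        exact Finset.sum_congr rfl fun i _ => hc i

private def rev18 (m : ℕ) (Q : Fin m → ℕ) :
    (∀ i : Fin m, Fin (Q i + 1)) ≃ (∀ i : Fin m, Fin (Q i + 1)) where
  toFun c i := (c i).rev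
  invFun c i := (c i).rev
  left_inv c := funext fun i => (c i).rev_rev
  right_inv c := funext fun i => (c i).rev_rev

private lemma count18 (m : ℕ) (Q : Fin m → ℕ) (d : ℕ) (hd : ∑ i, Q i ≤ d) :
    2 * ∑ c : (∀ i : Fin m, Fin (Q i + 1)), (d + 1 - ∑ i, (c i : ℕ))
      = (∏ i, (Q i + 1)) * (2 * d + 2 - ∑ i, Q i) := by
  rw [two_mul]
  nth_rewrite 1 [← Equiv.sum_comp (rev18 m Q) (fun c => d + 1 - ∑ i, (c i : ℕ))]
  rw [← Finset.sum_add_distrib]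
  have key : ∀ c : (∀ i : Fin m, Fin (Q i + 1)),
      (d + 1 - ∑ i, ((rev18 m Q c) i : ℕ)) + (d + 1 - ∑ i, (c i : ℕ))
        = 2 * d + 2 - ∑ i, Q i := by
    intro c
    have hsum : ∑ i, ((rev18 m Q c) i : ℕ) + ∑ i, (c i : ℕ) = ∑ i, Q i := by
      rw [← Finset.sum_add_distrib]
      refine Finset.sum_congr rfl fun i _ => ?_
      have h1 := Fin.val_rev (c i)
      have h2 := Nat.lt_succ_iff.mp (c i).2
      show ((c i).rev : ℕ) + (c i : ℕ) = Q i
      omega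
    omega
  rw [Finset.sum_congr rfl fun c _ => key c, Finset.sum_const, Finset.card_univ,
    Fintype.card_pi, smul_eq_mul]
  simp [Fintype.card_fin]

/-- For `(r-2)`-fold constrained multi-indexes: with `a_i = Q_i + 1`,
`S = ∑ a_i`, `P = ∏ a_i` and `q = ∑ Q_i`, for all `d ≥ q` the number of
`r`-tuples of degree `d` constrained by `Q` equals `P(2d - S + r)/2`. -/
theorem statement_18 (r : ℕ) (hr : 3 ≤ r) (Q : Fin (r - 2) → ℕ) (d : ℕ)
    (hd : ∑ i, Q i ≤ d) :
    2 * Set.ncard {D : Fin r → ℕ | ∑ i, D i = d ∧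
        ∀ i : Fin (r - 2), D (Fin.castLE (Nat.sub_le r 2) i) ≤ Q i}
      = (∏ i, (Q i + 1)) * (2 * d + r - ∑ i, (Q i + 1)) := by
  obtain ⟨m, rfl⟩ : ∃ m, r = m + 2 := ⟨r - 2, by omega⟩
  show 2 * Set.ncard {D : Fin (m + 2) → ℕ | ∑ i, D i = d ∧
        ∀ i : Fin m, D (Fin.castLE (Nat.le_add_right m 2) i) ≤ Q i}
      = (∏ i : Fin m, (Q i + 1)) * (2 * d + (m + 2) - ∑ i : Fin m, (Q i + 1))
  have hd' : ∑ i : Fin m, Q i ≤ d := hd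
  rw [← Nat.card_coe_set_eq]
  have h2 : Nat.card (Σ c : (∀ i : Fin m, Fin (Q i + 1)), Fin (d + 1 - ∑ i, (c i : ℕ)))
      = ∑ c : (∀ i : Fin m, Fin (Q i + 1)), (d + 1 - ∑ i, (c i : ℕ)) := by
    rw [Nat.card_eq_fintype_card, Fintype.card_sigma]
    simp only [Fintype.card_fin]
  have hcard := (Nat.card_congr (equiv18 m Q d hd')).trans h2
  refine Eq.trans (congrArg (fun x => 2 * x) hcard) ?_
  refine Eq.trans (count18 m Q d hd') ?_
  have hS : ∑ i : Fin m, (Q i + 1) = (∑ i : Fin m, Q i) + m := by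
    rw [Finset.sum_add_distrib, Finset.sum_const, Finset.card_univ, Fintype.card_fin,
      smul_eq_mul, mul_one]
  rw [hS]
  clear hcard h2 hd hd' hS
  generalize ∑ i : Fin m, Q i = q
  have harith : 2 * d + 2 - q = 2 * d + (m + 2) - (q + m) := by omega
  rw [harith]
end
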